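/- For every x⃗ ∈ B(n⃗) one has the upper bound g(x⃗) ≤ (1/2) Σ_{i=1}^N Σ_{j ∈ N[i]} 1/|x_i − x_j| + K_+. -/

import Mathlib

open MeasureTheory Real
open scoped Classical

noncomputable section

/-- One-particle configuration space `ℝ³`. -/
abbrev Pt := EuclideanSpace ℝ (Fin 3)
/-- Spatial configuration of `N` particles. -/
abbrev Cfg (N : ℕ) := Fin N → Pt
/-- Wave functions of `N` particles with `q` spin states. -/
abbrev WaveFn (N q : ℕ) := Cfg N → (Fin N → Fin q) → ℂ

/-- The weight `g(x⃗) = ∑_{i<j} 1/|x_i - x_j|`. -/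
def gInt (N : ℕ) (x : Cfg N) : ℝ :=
  ∑ i : Fin N, ∑ j ∈ Finset.Ioi i, 1 / ‖x i - x j‖

/-- `|∇_{x_i} f|` at `x`. -/
def gradI {N : ℕ} (f : Cfg N → ℂ) (i : Fin N) (x : Cfg N) : ℝ :=
  ‖fderiv ℝ (fun v : Pt => f (Function.update x i v)) (x i)‖

/-- The `m³` disjoint subcubes of side length `ℓ` of the cube `[0, mℓ]³`, indexed by
`j : Fin 3 → Fin m`. -/
def box {m : ℕ} (ℓ : ℝ) (j : Fin 3 → Fin m) : Set Pt :=
  {v : Pt | ∀ k : Fin 3, ((j k : ℕ) : ℝ) * ℓ ≤ v k ∧ v k < (((j k : ℕ) : ℝ) + 1) * ℓ}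

/-- The distance `d_{jk}` between boxes `B_j` and `B_k`. -/
def boxDist {m : ℕ} (ℓ : ℝ) (j k : Fin 3 → Fin m) : ℝ :=
  sInf (Set.image2 dist (box ℓ j) (box ℓ k))

/-- Number `n_j` of particles assigned to box `B_j` by the assignment `b`. -/
def nOcc {N m : ℕ} (b : Fin N → Fin 3 → Fin m) (j : Fin 3 → Fin m) : ℕ :=
  (Finset.univ.filter fun i => b i = j).card

/-- Number `m_j` of particles in the (at most 26) boxes touching `B_j`. -/
def mOcc {N m : ℕ} (ℓ : ℝ) (b : Fin N → Fin 3 → Fin m) (j : Fin 3 → Fin m) : ℕ :=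
  ∑ k ∈ Finset.univ.filter (fun k => k ≠ j ∧ boxDist ℓ j k = 0), nOcc b k

/-- `K_- = ∑_{j<k, d_{jk}>0} n_j n_k / (d_{jk} + 2√3 ℓ)`, written as a sum over ordered
pairs divided by two. -/
def Kminus {N m : ℕ} (ℓ : ℝ) (b : Fin N → Fin 3 → Fin m) : ℝ :=
  (1/2) * ∑ j : Fin 3 → Fin m, ∑ k : Fin 3 → Fin m,
    if 0 < boxDist ℓ j k then
      (nOcc b j : ℝ) * (nOcc b k : ℝ) / (boxDist ℓ j k + 2 * Real.sqrt 3 * ℓ)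
    else 0

/-- `K_+ = ∑_{j<k, d_{jk}>0} n_j n_k / d_{jk}`, written as a sum over ordered pairs
divided by two. -/
def Kplus {N m : ℕ} (ℓ : ℝ) (b : Fin N → Fin 3 → Fin m) : ℝ :=
  (1/2) * ∑ j : Fin 3 → Fin m, ∑ k : Fin 3 → Fin m,
    if 0 < boxDist ℓ j k then
      (nOcc b j : ℝ) * (nOcc b k : ℝ) / boxDist ℓ j k
    else 0

/-- `V = ∑_j n_j (n_j + m_j - 1)`. -/
def Vbox {N m : ℕ} (ℓ : ℝ) (b : Fin N → Fin 3 → Fin m) : ℝ :=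
  ∑ j : Fin 3 → Fin m, (nOcc b j : ℝ) * ((nOcc b j : ℝ) + (mOcc ℓ b j : ℝ) - 1)

/-- The region `B(n⃗) ⊂ ℝ^{3N}` where particle `i` lies in box `B_{b i}`. -/
def BSet {N m : ℕ} (ℓ : ℝ) (b : Fin N → Fin 3 → Fin m) : Set (Cfg N) :=
  {x : Cfg N | ∀ i, x i ∈ box ℓ (b i)}

/-- Antisymmetry under permutations of variables belonging to the same box. -/
def AntisymBox {N q m : ℕ} (b : Fin N → Fin 3 → Fin m) (ψ : WaveFn N q) : Prop :=
  ∀ τ : Equiv.Perm (Fin N), (∀ i, b (τ i) = b i) →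
    ∀ (x : Cfg N) (σ : Fin N → Fin q),
      ψ (x ∘ τ) (σ ∘ τ) = ((Equiv.Perm.sign τ : ℤ) : ℂ) * ψ x σ

/-- The class `A_q^{N,ℓ}(n⃗)`: wave functions supported in `B(n⃗)`, antisymmetric in the
variables belonging to the same box, with finite norms and energy integrands. -/
def MemABox {N q m : ℕ} (ℓ : ℝ) (b : Fin N → Fin 3 → Fin m) (ψ : WaveFn N q) : Prop :=
  AntisymBox b ψ ∧
  (∀ x σ, x ∉ BSet ℓ b → ψ x σ = 0) ∧
  (∀ σ, IntegrableOn (fun x : Cfg N => ‖ψ x σ‖^2) (BSet ℓ b)) ∧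
  (∀ σ, IntegrableOn (fun x : Cfg N => (gInt N x)^2 * ‖ψ x σ‖^2) (BSet ℓ b)) ∧
  (∀ σ i, IntegrableOn
    (fun x : Cfg N => (gInt N x)^2 * (gradI (fun y => ψ y σ) i x)^2) (BSet ℓ b))

/-- Unweighted squared `L²` norm of `ψ` (on `B(n⃗)`). -/
def normSq {N q m : ℕ} (ℓ : ℝ) (b : Fin N → Fin 3 → Fin m) (ψ : WaveFn N q) : ℝ :=
  ∑ σ : Fin N → Fin q, ∫ x in BSet ℓ b, ‖ψ x σ‖^2

/-- Weighted squared norm `‖ψ‖_g²`. -/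
def normGSq {N q m : ℕ} (ℓ : ℝ) (b : Fin N → Fin 3 → Fin m) (ψ : WaveFn N q) : ℝ :=
  ∑ σ : Fin N → Fin q, ∫ x in BSet ℓ b, (gInt N x)^2 * ‖ψ x σ‖^2

/-- Weighted inner product `⟨ψ,φ⟩_g` on `B(n⃗)`. -/
def innerG {N q m : ℕ} (ℓ : ℝ) (b : Fin N → Fin 3 → Fin m) (ψ φ : WaveFn N q) : ℂ :=
  ∑ σ : Fin N → Fin q,
    ∫ x in BSet ℓ b, ((gInt N x : ℝ) : ℂ)^2 * (starRingEnd ℂ) (ψ x σ) * φ x σ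

/-- The localized energy `E_g^ℓ(ψ) = ∑_i ∑_σ ∫_{B(n⃗)} g² |∇_i ψ|²`. -/
def energyLoc {N q m : ℕ} (ℓ : ℝ) (b : Fin N → Fin 3 → Fin m) (ψ : WaveFn N q) : ℝ :=
  ∑ i : Fin N, ∑ σ : Fin N → Fin q,
    ∫ x in BSet ℓ b, (gInt N x)^2 * (gradI (fun y => ψ y σ) i x)^2

/-! Write `g` as half the sum over ordered pairs. Pairs whose particles sit in equal or touching
boxes are kept as they are; for every other pair `|x_i - x_j| ≥ d_{b_i b_j} > 0`, so
`1/|x_i - x_j| ≤ 1/d_{b_i b_j}`, and grouping these far pairs by the boxes of their particles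
gives exactly `K_+`. -/

open Finset

lemma sum_sum_Ioi_two_nsmul_eq_sum_sum {α M : Type*} [Fintype α] [LinearOrder α]
    [LocallyFiniteOrderTop α] [LocallyFiniteOrderBot α] [AddCommMonoid M] (f : α → α → M)
    (hsymm : ∀ i j, f j i = f i j) (hdiag : ∀ i, f i i = 0) :
    2 • ∑ i, ∑ j ∈ Ioi i, f i j = ∑ i, ∑ j, f i j := by
  have h := sum_sum_Ioi_add_eq_sum_sum_off_diag f
  simp only [hsymm, ← two_nsmul, ← smul_sum] at h
  rw [h]
  refine sum_congr rfl fun i _ => ?_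
  rw [← sum_compl_add_sum {i}, sum_singleton, hdiag, add_zero]

lemma gInt_eq_half_sum {N : ℕ} (x : Cfg N) :
    gInt N x = (1/2) * ∑ i, ∑ j, 1 / ‖x i - x j‖ := by
  have h := sum_sum_Ioi_two_nsmul_eq_sum_sum (fun i j => 1 / ‖x i - x j‖)
    (fun i j => by rw [norm_sub_rev]) (fun i => by simp)
  rw [gInt, ← h, nsmul_eq_mul]
  ring

lemma boxDist_nonneg {m : ℕ} (ℓ : ℝ) (j k : Fin 3 → Fin m) : 0 ≤ boxDist ℓ j k :=
  Real.sInf_nonneg <| Set.forall_mem_image2.2 fun _ _ _ _ => dist_nonneg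

lemma boxDist_le_dist {m : ℕ} {ℓ : ℝ} {j k : Fin 3 → Fin m} {p q : Pt}
    (hp : p ∈ box ℓ j) (hq : q ∈ box ℓ k) : boxDist ℓ j k ≤ dist p q :=
  csInf_le ⟨0, Set.forall_mem_image2.2 fun _ _ _ _ => dist_nonneg⟩
    (Set.mem_image2_of_mem hp hq)

def boxDistInv {m : ℕ} (ℓ : ℝ) (j k : Fin 3 → Fin m) : ℝ :=
  if 0 < boxDist ℓ j k then 1 / boxDist ℓ j k else 0

lemma boxDistInv_nonneg {m : ℕ} (ℓ : ℝ) (j k : Fin 3 → Fin m) :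
    0 ≤ boxDistInv ℓ j k := by
  unfold boxDistInv
  split_ifs <;> positivity

lemma sum_comp_eq_sum_nOcc_mul {N m : ℕ} (b : Fin N → Fin 3 → Fin m)
    (G : (Fin 3 → Fin m) → ℝ) :
    ∑ i, G (b i) = ∑ j, (nOcc b j : ℝ) * G j := by
  rw [← sum_fiberwise' univ b G]
  refine sum_congr rfl fun j _ => ?_
  rw [sum_const, nsmul_eq_mul, nOcc]

lemma Kplus_eq_half_sum {N m : ℕ} (ℓ : ℝ) (b : Fin N → Fin 3 → Fin m) :
    Kplus ℓ b = (1/2) * ∑ i, ∑ j, boxDistInv ℓ (b i) (b j) := by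
  rw [sum_comp_eq_sum_nOcc_mul b fun j => ∑ i, boxDistInv ℓ j (b i), Kplus]
  congr 1
  refine sum_congr rfl fun j _ => ?_
  rw [sum_comp_eq_sum_nOcc_mul b (boxDistInv ℓ j), mul_sum]
  refine sum_congr rfl fun k _ => ?_
  unfold boxDistInv
  split_ifs <;> ring

/-- The set `N[i]`. -/
def nearby {N m : ℕ} (ℓ : ℝ) (b : Fin N → Fin 3 → Fin m) (i : Fin N) : Finset (Fin N) :=
  univ.filter fun j => j ≠ i ∧ (b j = b i ∨ boxDist ℓ (b i) (b j) = 0)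

lemma one_div_norm_sub_le_boxDistInv {N m : ℕ} {ℓ : ℝ} {b : Fin N → Fin 3 → Fin m}
    {x : Cfg N} (hx : x ∈ BSet ℓ b) {i j : Fin N} (hj : j ∉ nearby ℓ b i) :
    1 / ‖x i - x j‖ ≤ boxDistInv ℓ (b i) (b j) := by
  -- the diagonal term is `1 / ‖0‖ = 0`
  obtain rfl | hji := eq_or_ne j i
  · simpa using boxDistInv_nonneg ℓ (b j) (b j)
  have hpos : 0 < boxDist ℓ (b i) (b j) :=
    (boxDist_nonneg ℓ _ _).lt_of_ne' fun h => hj (by simp [nearby, hji, h])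
  rw [boxDistInv, if_pos hpos, ← dist_eq_norm]
  exact one_div_le_one_div_of_le hpos (boxDist_le_dist (hx i) (hx j))

lemma sum_one_div_norm_sub_le {N m : ℕ} {ℓ : ℝ} {b : Fin N → Fin 3 → Fin m}
    {x : Cfg N} (hx : x ∈ BSet ℓ b) (i : Fin N) :
    ∑ j, 1 / ‖x i - x j‖ ≤
      ∑ j ∈ nearby ℓ b i, 1 / ‖x i - x j‖ + ∑ j, boxDistInv ℓ (b i) (b j) := by
  rw [← sum_add_sum_compl (nearby ℓ b i)]
  gcongr
  calc ∑ j ∈ (nearby ℓ b i)ᶜ, 1 / ‖x i - x j‖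
      ≤ ∑ j ∈ (nearby ℓ b i)ᶜ, boxDistInv ℓ (b i) (b j) :=
        sum_le_sum fun j hj => one_div_norm_sub_le_boxDistInv hx (mem_compl.1 hj)
    _ ≤ ∑ j, boxDistInv ℓ (b i) (b j) :=
        sum_le_sum_of_subset_of_nonneg (subset_univ _) fun _ _ _ => boxDistInv_nonneg ℓ _ _

theorem gInt_upper_bound_on_BSet_general (N m : ℕ)
    (ℓ : ℝ) (b : Fin N → Fin 3 → Fin m)
    (x : Cfg N) (hx : x ∈ BSet ℓ b) :
    gInt N x ≤
      (1/2) * (∑ i : Fin N,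
        ∑ j ∈ Finset.univ.filter
          (fun j : Fin N => j ≠ i ∧ (b j = b i ∨ boxDist ℓ (b i) (b j) = 0)),
          1 / ‖x i - x j‖)
      + Kplus ℓ b := by
  calc gInt N x = (1/2) * ∑ i, ∑ j, 1 / ‖x i - x j‖ := gInt_eq_half_sum x
    _ ≤ (1/2) * ∑ i, (∑ j ∈ nearby ℓ b i, 1 / ‖x i - x j‖
          + ∑ j, boxDistInv ℓ (b i) (b j)) := by
        gcongr with i
        exact sum_one_div_norm_sub_le hx i
    _ = _ := by
        rw [sum_add_distrib, Kplus_eq_half_sum]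
        unfold nearby
        ring

/-- **Upper bound on `g` on `B(n⃗)`:**
`g(x⃗) ≤ (1/2) ∑_i ∑_{j ∈ N[i]} 1/|x_i - x_j| + K_+`, where `N[i]` is the set of indices
`j ≠ i` whose particle lies in the same box as particle `i` or in a touching box. -/
theorem gInt_upper_bound_on_BSet (N m : ℕ) (hN : 2 ≤ N) (hm : 2 ≤ m)
    (ℓ : ℝ) (hℓ : 0 < ℓ) (b : Fin N → Fin 3 → Fin m)
    (x : Cfg N) (hx : x ∈ BSet ℓ b) :
    gInt N x ≤
      (1/2) * (∑ i : Fin N,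
        ∑ j ∈ Finset.univ.filter
          (fun j : Fin N => j ≠ i ∧ (b j = b i ∨ boxDist ℓ (b i) (b j) = 0)),
          1 / ‖x i - x j‖)
      + Kplus ℓ b :=
  gInt_upper_bound_on_BSet_general N m ℓ b x hx
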